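/- (Borel–Cantelli, convergence direction, game version.) Let s_i ∈ [0,1) for i ∈ ω with ∑_i s_i < ∞, and let {A_i : i ∈ ω} be subsets of 2^ω such that player II has a winning strategy in the measure game G(s_i, A_i) for every i. Then player II has a winning strategy in G(0, ⋃_{m=1}^∞ ⋂_{i=m}^∞ A_i). -/

import Mathlib

open MeasureTheory

namespace MeasureGame

/-- Cantor space `2^ω`. -/
abbrev Cantor : Type := ℕ → Bool

/-- The basic cylinder set `N_t` determined by a finite binary string `t`. -/
def cyl (t : List Bool) : Set Cantor := {x | ∀ i : Fin t.length, x i.1 = t.get i}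

/-- A round of the measure game: player I's pair of rationals, then player II's bit. -/
abbrev GRound : Type := (ℚ × ℚ) × Bool

/-- A strategy for player I in the measure game. -/
abbrev StratI : Type := List GRound → ℚ × ℚ

/-- A strategy for player II in the measure game. -/
abbrev StratII : Type := List GRound → ℚ × ℚ → Bool

/-- A run of the measure game. -/
abbrev Run : Type := ℕ → GRound

/-- The history (list of completed rounds) before round `n`. -/
def hist (r : Run) (n : ℕ) : List GRound := (List.range n).map r

/-- Player II's bit at round `n`. -/
def bits (r : Run) (n : ℕ) : Bool := (r n).2

/-- The finite binary string of player II's first `n` bits. -/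
def path (r : Run) (n : ℕ) : List Bool := (List.range n).map (bits r)

/-- The value player I assigned at round `n` to the one-bit extension of the current path by `b`. -/
def valI (r : Run) (n : ℕ) (b : Bool) : ℚ := if b then (r n).1.2 else (r n).1.1

/-- The value selected by player II's move at round `n`. -/
def sel (r : Run) (n : ℕ) : ℚ := valI r n (bits r n)

/-- Legality requirements on the single value player I assigned to `path r n ++ [b]`:
it is nonnegative, at most `μ(N_{t⌢b})`, and strictly below it when the latter is positive. -/
def mOK (μ : Measure Cantor) (r : Run) (n : ℕ) (b : Bool) : Prop :=
  0 ≤ valI r n b ∧ ((valI r n b : ℝ) ≤ (μ (cyl (path r n ++ [b]))).toReal) ∧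
    (0 < (μ (cyl (path r n ++ [b]))).toReal → (valI r n b : ℝ) < (μ (cyl (path r n ++ [b]))).toReal)

/-- Player I's move at round `n` of a run is legal (for the game `G(s, ·)`). -/
def IOK (μ : Measure Cantor) (s : ℝ) (r : Run) : ℕ → Prop
  | 0 => mOK μ r 0 false ∧ mOK μ r 0 true ∧ s < ((r 0).1.1 : ℝ) + ((r 0).1.2 : ℝ)
  | (n + 1) => mOK μ r (n + 1) false ∧ mOK μ r (n + 1) true ∧
      (r (n + 1)).1.1 + (r (n + 1)).1.2 = sel r n

/-- Player II's move at round `n` of a run is legal: the selected value is nonzero. -/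
def IIOK (r : Run) (n : ℕ) : Prop := sel r n ≠ 0

/-- The run `r` is consistent with player I's strategy `σ`. -/
def ConsI (σ : StratI) (r : Run) : Prop := ∀ n, (r n).1 = σ (hist r n)

/-- The run `r` is consistent with player II's strategy `τ`. -/
def ConsII (τ : StratII) (r : Run) : Prop := ∀ n, (r n).2 = τ (hist r n) (r n).1

/-- Player II wins the run `r` of `G(s, A)`: either player I is the first to break a rule,
or all rules are followed and the sequence of II's bits belongs to `A`. -/
def IIWinsRun (μ : Measure Cantor) (s : ℝ) (A : Set Cantor) (r : Run) : Prop :=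
  (∃ n, (∀ m < n, IOK μ s r m ∧ IIOK r m) ∧ ¬ IOK μ s r n) ∨
    ((∀ n, IOK μ s r n ∧ IIOK r n) ∧ bits r ∈ A)

/-- Player I has a winning strategy in the measure game `G(s, A)`. -/
def WinsI (μ : Measure Cantor) (s : ℝ) (A : Set Cantor) : Prop :=
  ∃ σ : StratI, ∀ r : Run, ConsI σ r → ¬ IIWinsRun μ s A r

/-- Player II has a winning strategy in the measure game `G(s, A)`. -/
def WinsII (μ : Measure Cantor) (s : ℝ) (A : Set Cantor) : Prop :=
  ∃ τ : StratII, ∀ r : Run, ConsII τ r → IIWinsRun μ s A r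

/-- The outer measure `μ*(A) = inf {μ(U) : U open, A ⊆ U}`. -/
noncomputable def outerM (μ : Measure Cantor) (A : Set Cantor) : ℝ :=
  sInf {v : ℝ | ∃ U : Set Cantor, IsOpen U ∧ A ⊆ U ∧ v = (μ U).toReal}

/-- The inner measure `μ_*(A) = sup {μ(F) : F closed, F ⊆ A}`. -/
noncomputable def innerM (μ : Measure Cantor) (A : Set Cantor) : ℝ :=
  sSup {v : ℝ | ∃ F : Set Cantor, IsClosed F ∧ F ⊆ A ∧ v = (μ F).toReal}


/-!
Fix winning strategies `τᵢ` of player II in `G(sᵢ, Aᵢ)`. Restrict player I to values on the grid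
of mesh `εᵢ / 3ⁿ` at round `n`, call a finite string dead if no such legal play against `τᵢ`
produces it, and let `Dᵢ` be the union of the dead cylinders. Then `μ(Dᵢ) ≤ sᵢ + 2εᵢ`: otherwise
the dead part `F` of some depth `d` has `μ(F) > sᵢ + 2εᵢ`, and player I can open above `sᵢ` while
giving every node at most its `F`-mass minus a margin; `τᵢ` must then move into a node of depth
`d` meeting `F`, that is, a dead node, although the play reaches it.

In `G(0, ·)`, once player I has opened with total `q > 0`, player II chooses `M` and the `εᵢ` so
that `ν = ∑_{i ≥ M} μ ↾ Dᵢ` has total mass below `q`, and keeps `ν(N_t) < m_t` by moving to a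
child whose `ν`-mass is below I's value for it. As `m_t ≤ μ(N_t)`, no prefix of II's sequence `x`
is dead for any `τᵢ` with `i ≥ M`. The grid makes the tree of legal positions finitely branching,
so by Kőnig's lemma `x` is the outcome of a full legal play against `τᵢ`, hence `x ∈ Aᵢ`.
-/

open Filter

@[simp] lemma hist_zero (r : Run) : hist r 0 = [] := rfl

@[simp] lemma path_zero (r : Run) : path r 0 = [] := rfl

lemma hist_succ (r : Run) (n : ℕ) : hist r (n + 1) = hist r n ++ [r n] := by
  simp [hist, List.range_succ]

lemma path_succ (r : Run) (n : ℕ) : path r (n + 1) = path r n ++ [bits r n] := by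
  simp [path, List.range_succ]

@[simp] lemma length_hist (r : Run) (n : ℕ) : (hist r n).length = n := by simp [hist]

@[simp] lemma length_path (r : Run) (n : ℕ) : (path r n).length = n := by simp [path]

lemma map_snd_hist (r : Run) (n : ℕ) : (hist r n).map Prod.snd = path r n := by
  simp [hist, path, bits, Function.comp_def]

lemma hist_congr {r r' : Run} {n : ℕ} (h : ∀ k < n, r k = r' k) : hist r n = hist r' n :=
  List.map_inj_left.2 fun k hk => h k (List.mem_range.1 hk)

lemma path_congr {r r' : Run} {n : ℕ} (h : ∀ k < n, r k = r' k) : path r n = path r' n :=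
  List.map_inj_left.2 fun k hk => congrArg Prod.snd (h k (List.mem_range.1 hk))

lemma IOK_congr {μ : Measure Cantor} {s : ℝ} {r r' : Run} {n : ℕ} (h : ∀ k ≤ n, r k = r' k) :
    IOK μ s r n ↔ IOK μ s r' n := by
  have hpath : path r n = path r' n := path_congr fun k hk => h k hk.le
  cases n with
  | zero => simp only [IOK, mOK, valI, hpath, h 0 le_rfl]
  | succ n =>
    have hsel : sel r n = sel r' n := by unfold sel valI bits; rw [h n n.le_succ]
    simp only [IOK, mOK, valI, hpath, hsel, h (n + 1) le_rfl]

lemma IOK.mOK {μ : Measure Cantor} {s : ℝ} {r : Run} {n : ℕ} (h : IOK μ s r n) (b : Bool) :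
    mOK μ r n b := by
  cases n <;> cases b
  exacts [h.1, h.2.1, h.1, h.2.1]

lemma IOK.sel_le {μ : Measure Cantor} {s : ℝ} {r : Run} {n : ℕ} (h : IOK μ s r n) :
    (sel r n : ℝ) ≤ (μ (cyl (path r (n + 1)))).toReal := by
  rw [path_succ]
  exact (h.mOK _).2.1

lemma IIWinsRun.of_forall {μ : Measure Cantor} {s : ℝ} {A : Set Cantor} {r : Run}
    (hII : ∀ n, (∀ k ≤ n, IOK μ s r k) → IIOK r n) (hA : (∀ n, IOK μ s r n) → bits r ∈ A) :
    IIWinsRun μ s A r := by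
  classical
  by_cases hall : ∀ n, IOK μ s r n
  · exact Or.inr ⟨fun n => ⟨hall n, hII n fun k _ => hall k⟩, hA hall⟩
  · have hex : ∃ n, ¬IOK μ s r n := not_forall.1 hall
    refine Or.inl ⟨Nat.find hex, fun m hm => ?_, Nat.find_spec hex⟩
    have hok : ∀ k ≤ m, IOK μ s r k := fun k hk =>
      not_not.1 (Nat.find_min hex (hk.trans_lt hm))
    exact ⟨hok m le_rfl, hII m hok⟩

lemma IIWinsRun.forall_IIOK_and_mem {μ : Measure Cantor} {s : ℝ} {A : Set Cantor} {r : Run}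
    (h : IIWinsRun μ s A r) (hI : ∀ n, IOK μ s r n) : (∀ n, IIOK r n) ∧ bits r ∈ A := by
  rcases h with ⟨n, -, hn⟩ | ⟨hall, hA⟩
  · exact absurd (hI n) hn
  · exact ⟨fun n => (hall n).2, hA⟩

section Play

variable (σ : StratI) (τ : StratII)

def playRound (h : List GRound) : GRound := (σ h, τ h (σ h))

def playHist : ℕ → List GRound
  | 0 => []
  | n + 1 => playHist n ++ [playRound σ τ (playHist n)]

def play : Run := fun n => playRound σ τ (playHist σ τ n)

lemma hist_play (n : ℕ) : hist (play σ τ) n = playHist σ τ n := by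
  induction n with
  | zero => rfl
  | succ n ih => rw [hist_succ, ih]; rfl

lemma consI_play : ConsI σ (play σ τ) := fun n => by rw [hist_play]; rfl

lemma consII_play : ConsII τ (play σ τ) := fun n => by rw [hist_play]; rfl

end Play

def initSeg (x : Cantor) (n : ℕ) : List Bool := (List.range n).map x

lemma initSeg_succ (x : Cantor) (n : ℕ) : initSeg x (n + 1) = initSeg x n ++ [x n] := by
  simp [initSeg, List.range_succ]

lemma initSeg_eq_initSeg_iff {x y : Cantor} {n : ℕ} :
    initSeg x n = initSeg y n ↔ ∀ k < n, x k = y k := by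
  simp [initSeg, List.map_inj_left]

lemma mem_cyl_iff_initSeg {t : List Bool} {x : Cantor} : x ∈ cyl t ↔ initSeg x t.length = t := by
  simp only [cyl, Set.mem_ofPred_eq, List.ext_getElem_iff, initSeg, List.length_map,
    List.length_range, List.getElem_map, List.getElem_range, true_and]
  exact ⟨fun h i hi _ => h ⟨i, hi⟩, fun h i => h i i.2 i.2⟩

@[simp] lemma cyl_nil : cyl [] = Set.univ := by
  ext x
  simp [cyl]

lemma mem_cyl_append {t : List Bool} {b : Bool} {x : Cantor} :
    x ∈ cyl (t ++ [b]) ↔ x ∈ cyl t ∧ x t.length = b := by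
  rw [mem_cyl_iff_initSeg, mem_cyl_iff_initSeg, List.length_append, List.length_singleton,
    initSeg_succ]
  constructor
  · intro h
    obtain ⟨h₁, h₂⟩ := List.append_inj' h rfl
    exact ⟨h₁, List.singleton_inj.1 h₂⟩
  · rintro ⟨h, rfl⟩
    rw [h]

lemma cyl_append_subset (t : List Bool) (b : Bool) : cyl (t ++ [b]) ⊆ cyl t :=
  fun _ hx => (mem_cyl_append.1 hx).1

lemma measurableSet_cyl (t : List Bool) : MeasurableSet (cyl t) := by
  have : cyl t = ⋂ i : Fin t.length, (fun x : Cantor => x i) ⁻¹' {t.get i} := by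
    ext x
    simp [cyl]
  rw [this]
  exact .iInter fun i => measurable_pi_apply _ (measurableSet_singleton _)

lemma measure_cyl_inter_eq_add (μ : Measure Cantor) (F : Set Cantor) (t : List Bool) :
    μ (cyl t ∩ F) = μ (cyl (t ++ [false]) ∩ F) + μ (cyl (t ++ [true]) ∩ F) := by
  rw [← measure_inter_add_sdiff (cyl t ∩ F) (measurableSet_cyl (t ++ [false]))]
  congr 2 <;> ext x <;> simp only [Set.mem_inter_iff, Set.mem_sdiff, mem_cyl_append] <;>
    cases x t.length <;> tauto

/-- The ratio `3` leaves room for the margins of both children plus one rounding step. -/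
def mesh (e : ℚ) (n : ℕ) : ℚ := e / 3 ^ n

lemma mesh_pos {e : ℚ} (he : 0 < e) (n : ℕ) : 0 < mesh e n := by
  unfold mesh
  positivity

@[simp] lemma mesh_zero (e : ℚ) : mesh e 0 = e := by simp [mesh]

lemma mesh_succ (e : ℚ) (n : ℕ) : mesh e n = 3 * mesh e (n + 1) := by
  unfold mesh
  rw [pow_succ]
  field_simp

/-- The largest multiple of `c` that is at most `max z 0`. -/
noncomputable def gridFloor (c : ℚ) (z : ℝ) : ℚ := ⌊z / c⌋₊ * c

lemma gridFloor_mem (c : ℚ) (z : ℝ) : gridFloor c z ∈ AddSubgroup.zmultiples c :=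
  ⟨⌊z / c⌋₊, by simp [gridFloor]⟩

lemma gridFloor_nonneg {c : ℚ} (hc : 0 ≤ c) (z : ℝ) : 0 ≤ gridFloor c z := by
  unfold gridFloor
  positivity

lemma gridFloor_le {c : ℚ} (hc : 0 < c) {z : ℝ} (hpos : 0 < gridFloor c z) :
    (gridFloor c z : ℝ) ≤ z := by
  have hc' : (0 : ℝ) < c := by exact_mod_cast hc
  have hz : 0 ≤ z / c := by
    by_contra h
    simp [gridFloor, Nat.floor_of_nonpos (not_le.1 h).le] at hpos
  unfold gridFloor
  push_cast
  calc (⌊z / c⌋₊ : ℝ) * c ≤ z / c * c := by gcongr; exact Nat.floor_le hz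
    _ = z := div_mul_cancel₀ z hc'.ne'

lemma sub_lt_gridFloor {c : ℚ} (hc : 0 < c) (z : ℝ) : z - c < gridFloor c z := by
  have hc' : (0 : ℝ) < c := by exact_mod_cast hc
  have := Nat.lt_floor_add_one (z / c)
  unfold gridFloor
  push_cast
  calc z - c = (z / c - 1) * c := by field_simp
    _ < ⌊z / c⌋₊ * c := by gcongr; linarith

def FitsUnder (c v : ℚ) (m : ℝ) : Prop :=
  0 ≤ v ∧ v ∈ AddSubgroup.zmultiples c ∧ (0 < v → (v : ℝ) ≤ m - c)

noncomputable def split (c : ℚ) (a : ℝ) (u : ℚ) : ℚ × ℚ :=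
  (min u (gridFloor c (a - c)), u - min u (gridFloor c (a - c)))

lemma split_fst_add_snd (c : ℚ) (a : ℝ) (u : ℚ) : (split c a u).1 + (split c a u).2 = u := by
  simp [split]

lemma split_fitsUnder {c u : ℚ} {a b : ℝ} (hc : 0 < c) (hu : FitsUnder (3 * c) u (a + b)) :
    FitsUnder c (split c a u).1 a ∧ FitsUnder c (split c a u).2 b := by
  obtain ⟨hu0, hug, hub⟩ := hu
  have hug' : u ∈ AddSubgroup.zmultiples c :=
    AddSubgroup.zmultiples_le.2 (AddSubgroup.mem_zmultiples_iff.2 ⟨3, by simp [zsmul_eq_mul]⟩) hug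
  have hg0 := gridFloor_nonneg hc.le (a - c)
  have hgt := sub_lt_gridFloor hc (a - c)
  have hzero : FitsUnder c 0 b :=
    ⟨le_rfl, (AddSubgroup.zmultiples c).zero_mem, fun h => absurd h (lt_irrefl 0)⟩
  rcases le_total u (gridFloor c (a - c)) with h | h
  · simp only [split, min_eq_left h, sub_self]
    refine ⟨⟨hu0, hug', fun hpos => ?_⟩, hzero⟩
    have hle := gridFloor_le hc (hpos.trans_le h)
    have : (u : ℝ) ≤ gridFloor c (a - c) := by exact_mod_cast h
    linarith
  · simp only [split, min_eq_right h]
    refine ⟨⟨hg0, gridFloor_mem c _, gridFloor_le hc⟩,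
      ⟨sub_nonneg.2 h, sub_mem hug' (gridFloor_mem c _), fun hpos => ?_⟩⟩
    have hu : (0 : ℚ) < u := by linarith
    have := hub hu
    push_cast at this ⊢
    linarith

section Compliance

variable (μ : Measure Cantor) (τ : StratII) (s : ℝ) (e : ℚ)

/-- The grid condition makes the tree of compliant positions finitely branching. -/
def Compliant (n : ℕ) (r : Run) : Prop :=
  ∀ k < n, IOK μ s r k ∧ (∀ b, valI r k b ∈ AddSubgroup.zmultiples (mesh e (k + 1))) ∧
    (r k).2 = τ (hist r k) (r k).1

def Alive (t : List Bool) : Prop := ∃ r, Compliant μ τ s e t.length r ∧ path r t.length = t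

def deadAt (d : ℕ) : Set Cantor := {x | ¬Alive μ τ s e (initSeg x d)}

def deadSet : Set Cantor := ⋃ d, deadAt μ τ s e d

variable {μ τ s e}

lemma Compliant.mono {m n : ℕ} {r : Run} (h : Compliant μ τ s e n r) (hmn : m ≤ n) :
    Compliant μ τ s e m r :=
  fun k hk => h k (hk.trans_le hmn)

lemma compliant_congr {n : ℕ} {r r' : Run} (h : ∀ k < n, r k = r' k) :
    Compliant μ τ s e n r ↔ Compliant μ τ s e n r' := by
  refine forall₂_congr fun k hk => ?_
  have hle : ∀ j ≤ k, r j = r' j := fun j hj => h j (hj.trans_lt hk)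
  rw [IOK_congr hle, hist_congr fun j hj => hle j hj.le]
  simp only [valI, hle k le_rfl]

lemma Compliant.alive_path {n : ℕ} {r : Run} (h : Compliant μ τ s e n r) :
    Alive μ τ s e (path r n) :=
  ⟨r, by rwa [length_path], by rw [length_path]⟩

lemma alive_nil : Alive μ τ s e [] := ⟨fun _ => default, fun k hk => absurd hk k.not_lt_zero, rfl⟩

lemma Alive.of_append {t : List Bool} {b : Bool} (h : Alive μ τ s e (t ++ [b])) :
    Alive μ τ s e t := by
  obtain ⟨r, hc, hp⟩ := h
  rw [List.length_append, List.length_singleton, path_succ] at *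
  exact ⟨r, hc.mono t.length.le_succ, (List.append_inj' hp rfl).1⟩

lemma monotone_deadAt : Monotone (deadAt μ τ s e) :=
  monotone_nat_of_le_succ fun d x hx halive =>
    hx (by rw [initSeg_succ] at halive; exact halive.of_append)

lemma cyl_subset_deadSet {t : List Bool} (h : ¬Alive μ τ s e t) : cyl t ⊆ deadSet μ τ s e :=
  fun x hx => Set.mem_iUnion.2
    ⟨t.length, by rwa [deadAt, Set.mem_ofPred_eq, mem_cyl_iff_initSeg.1 hx]⟩

end Compliance

def pick (g : GRound) : ℚ := if g.2 then g.1.2 else g.1.1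

def lastPick (u₀ : ℚ) (h : List GRound) : ℚ := (h.getLast?.map pick).getD u₀

lemma lastPick_hist_succ (u₀ : ℚ) (r : Run) (n : ℕ) : lastPick u₀ (hist r (n + 1)) = sel r n := by
  simp only [lastPick, hist_succ, List.getLast?_concat, Option.map_some, Option.getD_some]
  rfl

lemma FitsUnder.mOK {μ : Measure Cantor} [IsFiniteMeasure μ] {F : Set Cantor} {c : ℚ} (hc : 0 < c)
    {r : Run} {n : ℕ} {b : Bool}
    (h : FitsUnder c (valI r n b) (μ (cyl (path r n ++ [b]) ∩ F)).toReal) : mOK μ r n b := by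
  obtain ⟨h0, -, hle⟩ := h
  have hF : (μ (cyl (path r n ++ [b]) ∩ F)).toReal ≤ (μ (cyl (path r n ++ [b]))).toReal :=
    ENNReal.toReal_mono (measure_ne_top _ _) (measure_mono Set.inter_subset_left)
  have hc' : (0 : ℝ) < c := by exact_mod_cast hc
  unfold MeasureGame.mOK
  rcases h0.eq_or_lt with h | h
  · rw [← h]
    exact ⟨le_rfl, by simp, by simp⟩
  · have := hle h
    exact ⟨h0, by linarith, fun _ => by linarith⟩

section Navigator

variable (μ : Measure Cantor) (F : Set Cantor) (e u₀ : ℚ)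

/-- Player I opens with `u₀` and gives every child at most its mass inside `F`, minus a margin,
so that player II can only move to nodes that meet `F`. -/
noncomputable def navigator : StratI := fun h =>
  split (mesh e (h.length + 1)) (μ (cyl (h.map Prod.snd ++ [false]) ∩ F)).toReal (lastPick u₀ h)

variable {μ F e u₀} [IsFiniteMeasure μ] {r : Run}

lemma navigator_round (hr : ConsI (navigator μ F e u₀) r) (he : 0 < e) {n : ℕ}
    (h : FitsUnder (mesh e n) (lastPick u₀ (hist r n)) (μ (cyl (path r n) ∩ F)).toReal) :
    (r n).1.1 + (r n).1.2 = lastPick u₀ (hist r n) ∧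
      ∀ b, FitsUnder (mesh e (n + 1)) (valI r n b) (μ (cyl (path r n ++ [b]) ∩ F)).toReal := by
  have hrn : (r n).1 = split (mesh e (n + 1)) (μ (cyl (path r n ++ [false]) ∩ F)).toReal
      (lastPick u₀ (hist r n)) := by
    rw [hr n, navigator, length_hist, map_snd_hist]
  rw [mesh_succ, measure_cyl_inter_eq_add, ENNReal.toReal_add (measure_ne_top _ _)
    (measure_ne_top _ _)] at h
  obtain ⟨h₀, h₁⟩ := split_fitsUnder (mesh_pos he _) h
  refine ⟨by rw [hrn]; exact split_fst_add_snd .., fun b => ?_⟩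
  cases b
  · show FitsUnder _ (r n).1.1 _
    rwa [hrn]
  · show FitsUnder _ (r n).1.2 _
    rwa [hrn]

lemma navigator_fitsUnder (hr : ConsI (navigator μ F e u₀) r) (he : 0 < e)
    (h₀ : FitsUnder e u₀ (μ F).toReal) (n : ℕ) :
    FitsUnder (mesh e n) (lastPick u₀ (hist r n)) (μ (cyl (path r n) ∩ F)).toReal := by
  induction n with
  | zero => simpa [lastPick] using h₀
  | succ n ih =>
    rw [lastPick_hist_succ, path_succ]
    exact (navigator_round hr he ih).2 _

lemma navigator_compliant {τ : StratII} {s : ℝ} (hr : ConsI (navigator μ F e u₀) r)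
    (hτ : ConsII τ r) (he : 0 < e) (h₀ : FitsUnder e u₀ (μ F).toReal) (hs : s < u₀) (n : ℕ) :
    Compliant μ τ s e n r := by
  intro k _
  obtain ⟨hsum, hfit⟩ := navigator_round hr he (navigator_fitsUnder hr he h₀ k)
  have hmOK : ∀ b, mOK μ r k b := fun b => (hfit b).mOK (mesh_pos he _)
  refine ⟨?_, fun b => (hfit b).2.1, hτ k⟩
  cases k with
  | zero =>
    have hsum' : ((r 0).1.1 : ℝ) + (r 0).1.2 = u₀ := by exact_mod_cast hsum
    exact ⟨hmOK false, hmOK true, hsum' ▸ hs⟩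
  | succ k => exact ⟨hmOK false, hmOK true, hsum.trans (lastPick_hist_succ u₀ r k)⟩

end Navigator

section DeadSet

variable {μ : Measure Cantor} [IsFiniteMeasure μ] {τ : StratII} {s : ℝ} {A : Set Cantor} {e : ℚ}

theorem measure_deadAt_le (hτ : ∀ r, ConsII τ r → IIWinsRun μ s A r) (he : 0 < e) (d : ℕ) :
    μ (deadAt μ τ s e d) ≤ ENNReal.ofReal (s + 2 * e) := by
  set F := deadAt μ τ s e d
  rw [← ENNReal.ofReal_toReal (measure_ne_top μ F)]
  refine ENNReal.ofReal_le_ofReal (le_of_not_gt fun hF => ?_)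
  set u₀ := gridFloor e ((μ F).toReal - e)
  have h₀ : FitsUnder e u₀ (μ F).toReal :=
    ⟨gridFloor_nonneg he.le _, gridFloor_mem _ _, gridFloor_le he⟩
  have hs : s < u₀ := by linarith [sub_lt_gridFloor he ((μ F).toReal - e)]
  set r := play (navigator μ F e u₀) τ
  have hc := navigator_compliant (consI_play _ τ) (consII_play _ τ) he h₀ hs
  have hII := ((hτ r (consII_play _ τ)).forall_IIOK_and_mem
    fun n => (hc (n + 1) n n.lt_succ_self).1).1 d
  obtain ⟨hsel0, -, hsel⟩ : FitsUnder _ (sel r d) _ :=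
    (navigator_round (consI_play _ τ) he (navigator_fitsUnder (consI_play _ τ) he h₀ d)).2 _
  have hpos : 0 < (μ (cyl (path r (d + 1)) ∩ F)).toReal := by
    have hsel_pos : 0 < sel r d := lt_of_le_of_ne hsel0 (Ne.symm hII)
    have : (0 : ℝ) < sel r d := by exact_mod_cast hsel_pos
    have : (0 : ℝ) < mesh e (d + 1) := by exact_mod_cast mesh_pos he (d + 1)
    rw [path_succ]
    linarith [hsel hsel_pos]
  obtain ⟨x, hx, hxF⟩ := nonempty_of_measure_ne_zero (ENNReal.toReal_pos_iff.1 hpos).1.ne'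
  rw [path_succ] at hx
  apply hxF
  rw [← length_path r d, mem_cyl_iff_initSeg.1 (cyl_append_subset _ _ hx)]
  exact (hc d).alive_path

theorem measure_deadSet_le (hτ : ∀ r, ConsII τ r → IIWinsRun μ s A r) (he : 0 < e) :
    μ (deadSet μ τ s e) ≤ ENNReal.ofReal (s + 2 * e) := by
  rw [deadSet, monotone_deadAt.measure_iUnion]
  exact iSup_le (measure_deadAt_le hτ he)

end DeadSet

def trunc (n : ℕ) (r : Run) : Run := fun k => if k < n then r k else default

lemma trunc_of_lt {n k : ℕ} (r : Run) (hk : k < n) : trunc n r k = r k := if_pos hk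

lemma trunc_trunc {i j : ℕ} (hij : i ≤ j) (r : Run) : trunc i (trunc j r) = trunc i r := by
  funext k
  by_cases hk : k < i
  · simp [trunc, hk, hk.trans_le hij]
  · simp [trunc, hk]

lemma finite_zmultiples_inter {c : ℚ} (hc : 0 < c) (B : ℝ) :
    {q : ℚ | q ∈ AddSubgroup.zmultiples c ∧ 0 ≤ q ∧ (q : ℝ) ≤ B}.Finite := by
  have hc' : (0 : ℝ) < c := by exact_mod_cast hc
  refine ((Set.finite_Icc 0 ⌈B / c⌉).image fun k : ℤ => k • c).subset ?_
  rintro _ ⟨⟨k, rfl⟩, h0, hB⟩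
  simp only [zsmul_eq_mul, Rat.cast_mul, Rat.cast_intCast] at h0 hB
  refine ⟨k, ⟨?_, ?_⟩, rfl⟩
  · exact_mod_cast nonneg_of_mul_nonneg_left h0 hc
  · exact Int.cast_le.1 (((le_div_iff₀ hc').2 hB).trans (Int.le_ceil _))

section Konig

variable {μ : Measure Cantor} {τ : StratII} {s : ℝ} {e : ℚ} {x : Cantor}

variable (μ τ s e x) in
def CompliantAlong (n : ℕ) (r : Run) : Prop :=
  Compliant μ τ s e n r ∧ (∀ k < n, bits r k = x k) ∧ ∀ k ≥ n, r k = default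

lemma compliantAlong_trunc {n : ℕ} {r : Run} (hc : Compliant μ τ s e n r)
    (hx : ∀ k < n, bits r k = x k) : CompliantAlong μ τ s e x n (trunc n r) := by
  refine ⟨(compliant_congr fun k hk => (trunc_of_lt r hk).symm).1 hc, fun k hk => ?_,
    fun k hk => if_neg (not_lt.2 hk)⟩
  rw [bits, trunc_of_lt r hk]
  exact hx k hk

lemma CompliantAlong.trunc_of_le {i j : ℕ} {r : Run} (h : CompliantAlong μ τ s e x j r)
    (hij : i ≤ j) :
    CompliantAlong μ τ s e x i (trunc i r) :=
  compliantAlong_trunc (h.1.mono hij) fun k hk => h.2.1 k (hk.trans_le hij)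

lemma CompliantAlong.trunc_eq {n : ℕ} {r : Run} (h : CompliantAlong μ τ s e x n r) :
    trunc n r = r := by
  funext k
  by_cases hk : k < n
  · exact trunc_of_lt r hk
  · exact (if_neg hk).trans (h.2.2 k (not_lt.1 hk)).symm

/-- Extensions of a compliant position by one round are determined by I's pair of values, which
ranges over a finite set. -/
lemma finite_compliantAlong_succ [IsFiniteMeasure μ] (he : 0 < e) (i : ℕ) (a : Run) :
    {b | CompliantAlong μ τ s e x (i + 1) b ∧ trunc i b = a}.Finite := by
  set S := {q : ℚ | q ∈ AddSubgroup.zmultiples (mesh e (i + 1)) ∧ 0 ≤ q ∧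
    (q : ℝ) ≤ (μ Set.univ).toReal}
  have hS : S.Finite := finite_zmultiples_inter (mesh_pos he _) _
  refine Set.Finite.of_finite_image ((hS.prod hS).subset ?_) ?_ (f := fun b : Run => (b i).1)
  · rintro _ ⟨b, ⟨hb, -⟩, rfl⟩
    obtain ⟨hI, hgrid, -⟩ := hb.1 i i.lt_succ_self
    have hval : ∀ c, valI b i c ∈ S := fun c =>
      ⟨hgrid c, (hI.mOK c).1, (hI.mOK c).2.1.trans
        (ENNReal.toReal_mono (measure_ne_top _ _) (measure_mono (Set.subset_univ _)))⟩
    exact ⟨hval false, hval true⟩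
  · rintro b ⟨hb, hba⟩ b' ⟨hb', hba'⟩ hpair
    have hlt : ∀ k < i, b k = b' k := fun k hk => by
      rw [← trunc_of_lt b hk, ← trunc_of_lt b' hk, hba, hba']
    funext k
    rcases lt_trichotomy k i with hk | rfl | hk
    · exact hlt k hk
    · refine Prod.ext hpair ?_
      rw [(hb.1 k k.lt_succ_self).2.2, (hb'.1 k k.lt_succ_self).2.2, hist_congr hlt]
      exact congrArg _ hpair
    · rw [hb.2.2 k hk, hb'.2.2 k hk]

/-- Kőnig's lemma for the tree of compliant positions. -/
theorem exists_compliant_run [IsFiniteMeasure μ] (he : 0 < e)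
    (h : ∀ n, Alive μ τ s e (initSeg x n)) :
    ∃ r, (∀ n, Compliant μ τ s e n r) ∧ bits r = x := by
  let α (n : ℕ) := {r // CompliantAlong μ τ s e x n r}
  have : Subsingleton (α 0) := ⟨fun a b => Subtype.ext <| by
    rw [← a.2.trunc_eq, ← b.2.trunc_eq]
    rfl⟩
  have : ∀ n, Nonempty (α n) := fun n => by
    obtain ⟨r, hc, hp⟩ := h n
    rw [initSeg, List.length_map, List.length_range] at hc hp
    exact ⟨⟨_, compliantAlong_trunc hc (initSeg_eq_initSeg_iff.1 hp)⟩⟩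
  obtain ⟨f, hf⟩ := exists_seq_forall_proj_of_forall_finite (α := α)
    (fun hij a => ⟨trunc _ a.1, a.2.trunc_of_le hij⟩) (fun _ a => Subtype.ext a.2.trunc_eq)
    (fun _ _ _ hij _ a => Subtype.ext (trunc_trunc hij a.1)) fun i a =>
      ((finite_compliantAlong_succ he i a.1).preimage Subtype.val_injective.injOn).subset
        fun b hb => ⟨b.2, congrArg Subtype.val hb⟩
  have hf_apply : ∀ n k, k < n → (f n).1 k = (f (k + 1)).1 k := fun n k hk => by
    rw [← congrArg (fun a : α (k + 1) => a.1 k) (hf hk)]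
    exact (trunc_of_lt _ k.lt_succ_self).symm
  refine ⟨fun k => (f (k + 1)).1 k, fun n => (compliant_congr (hf_apply n)).1 (f n).2.1,
    funext fun k => ?_⟩
  rw [bits, ← hf_apply (k + 1) k k.lt_succ_self]
  exact (f (k + 1)).2.2.1 k k.lt_succ_self

theorem mem_of_forall_alive [IsFiniteMeasure μ] {A : Set Cantor}
    (hτ : ∀ r, ConsII τ r → IIWinsRun μ s A r) (he : 0 < e)
    (h : ∀ n, Alive μ τ s e (initSeg x n)) : x ∈ A := by
  obtain ⟨r, hc, rfl⟩ := exists_compliant_run he h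
  have hround : ∀ n, IOK μ s r n ∧ _ ∧ (r n).2 = τ (hist r n) (r n).1 :=
    fun n => hc (n + 1) n n.lt_succ_self
  exact ((hτ r fun n => (hround n).2.2).forall_IIOK_and_mem fun n => (hround n).1).2

end Konig

/-- Player I's opening total; in the first round it is read off the current move `mv`. -/
def openingTotal (h : List GRound) (mv : ℚ × ℚ) : ℚ :=
  ((h.map Prod.fst).headD mv).1 + ((h.map Prod.fst).headD mv).2

lemma openingTotal_hist (r : Run) (n : ℕ) :
    openingTotal (hist r n) (r n).1 = (r 0).1.1 + (r 0).1.2 := by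
  cases n with
  | zero => rfl
  | succ n => simp [openingTotal, hist, List.range_succ_eq_map]

/-- `ν q` is the measure used after an opening total `q`. As the two values offered by player I add
up to the current one, some child has `ν`-mass below its value whenever the current node does. -/
noncomputable def massFollower (ν : ℚ → Measure Cantor) : StratII := fun h mv =>
  if ν (openingTotal h mv) (cyl (h.map Prod.snd ++ [false])) < ENNReal.ofReal mv.1 then false
  else true

section MassFollower

variable {ν : ℚ → Measure Cantor} {r : Run}

lemma massFollower_step (hr : ConsII (massFollower ν) r) (n : ℕ)
    (h : ν ((r 0).1.1 + (r 0).1.2) (cyl (path r n)) <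
      ENNReal.ofReal (((r n).1.1 + (r n).1.2 : ℚ) : ℝ)) :
    ν ((r 0).1.1 + (r 0).1.2) (cyl (path r (n + 1))) < ENNReal.ofReal (sel r n) := by
  set μ := ν ((r 0).1.1 + (r 0).1.2)
  have hbit : bits r n =
      if μ (cyl (path r n ++ [false])) < ENNReal.ofReal (r n).1.1 then false else true := by
    rw [bits, hr n, massFollower, openingTotal_hist, map_snd_hist]
  by_cases hlt : μ (cyl (path r n ++ [false])) < ENNReal.ofReal (r n).1.1
  · rw [if_pos hlt] at hbit
    rw [sel, path_succ, valI, hbit]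
    exact hlt
  · rw [if_neg hlt] at hbit
    rw [sel, path_succ, valI, hbit]
    have hsplit := measure_cyl_inter_eq_add μ Set.univ (path r n)
    simp only [Set.inter_univ] at hsplit
    rw [hsplit] at h
    refine (ENNReal.add_lt_add_iff_left (ENNReal.ofReal_ne_top (r := (r n).1.1))).1 ?_
    calc ENNReal.ofReal (r n).1.1 + μ (cyl (path r n ++ [true]))
        ≤ μ (cyl (path r n ++ [false])) + μ (cyl (path r n ++ [true])) := by
          gcongr; exact not_lt.1 hlt
      _ < ENNReal.ofReal (((r n).1.1 + (r n).1.2 : ℚ) : ℝ) := h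
      _ ≤ ENNReal.ofReal (r n).1.1 + ENNReal.ofReal (r n).1.2 := by
          push_cast
          exact ENNReal.ofReal_add_le

lemma massFollower_lt_sel (hr : ConsII (massFollower ν) r)
    (hν : ν ((r 0).1.1 + (r 0).1.2) Set.univ < ENNReal.ofReal (((r 0).1.1 + (r 0).1.2 : ℚ) : ℝ))
    {n : ℕ}
    (hsum : ∀ k < n, (r (k + 1)).1.1 + (r (k + 1)).1.2 = sel r k) :
    ν ((r 0).1.1 + (r 0).1.2) (cyl (path r (n + 1))) < ENNReal.ofReal (sel r n) := by
  induction n with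
  | zero => exact massFollower_step hr 0 (by simpa using hν)
  | succ n ih =>
    refine massFollower_step hr (n + 1) ?_
    rw [hsum n n.lt_succ_self]
    exact ih fun k hk => hsum k (hk.trans n.lt_succ_self)

end MassFollower

lemma eventually_tail_lt (s : ℕ → ℝ) (q : ℚ) :
    ∀ᶠ M in atTop, 1 ≤ M ∧ (0 < q → ∑' k, s (k + M) < q / 2) := by
  refine (eventually_ge_atTop 1).and ?_
  by_cases hq : 0 < q
  · have : (0 : ℝ) < q / 2 := by positivity
    exact ((tendsto_sum_nat_add s).eventually (gt_mem_nhds this)).mono fun _ hM _ => hM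
  · exact .of_forall fun _ h => absurd h hq

section TailDeadMass

variable (μ : Measure Cantor) (τ : ℕ → StratII) (s : ℕ → ℝ)

/-- With grid sizes `q / 2 ^ (k + 3)` the dead sets of the games `M, M + 1, …` have total measure
at most `∑_{i ≥ M} sᵢ + q / 2`. -/
noncomputable def tailDeadMass (M : ℕ) (q : ℚ) : Measure Cantor :=
  Measure.sum fun k => μ.restrict (deadSet μ (τ (k + M)) (s (k + M)) (q / 2 ^ (k + 3)))

variable {μ τ s}

lemma tailDeadMass_univ_lt [IsFiniteMeasure μ] {A : ℕ → Set Cantor}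
    (hτ : ∀ i r, ConsII (τ i) r → IIWinsRun μ (s i) (A i) r) (hs0 : ∀ i, 0 ≤ s i)
    (hsum : Summable s) {M : ℕ} {q : ℚ} (hq : 0 < q) (hM : ∑' k, s (k + M) < q / 2) :
    tailDeadMass μ τ s M q Set.univ < ENNReal.ofReal q := by
  have hsM : Summable fun k => s (k + M) := (summable_nat_add_iff M).2 hsum
  have hgeom : HasSum (fun k : ℕ => 2 * ((q / 2 ^ (k + 3) : ℚ) : ℝ)) (q / 2) := by
    convert hasSum_geometric_two' ((q : ℝ) / 2) using 1
    funext k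
    push_cast
    ring
  calc tailDeadMass μ τ s M q Set.univ
      = ∑' k, μ (deadSet μ (τ (k + M)) (s (k + M)) (q / 2 ^ (k + 3))) := by
        simp [tailDeadMass, Measure.sum_apply _ MeasurableSet.univ]
    _ ≤ ∑' k, ENNReal.ofReal (s (k + M) + 2 * ((q / 2 ^ (k + 3) : ℚ) : ℝ)) :=
        ENNReal.tsum_le_tsum fun k => measure_deadSet_le (hτ _) (by positivity)
    _ = ENNReal.ofReal (∑' k, s (k + M) + q / 2) := by
        rw [← ENNReal.ofReal_tsum_of_nonneg (fun k => add_nonneg (hs0 _) (by positivity))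
          (hsM.add hgeom.summable), hsM.tsum_add hgeom.summable, hgeom.tsum_eq]
    _ < ENNReal.ofReal q := (ENNReal.ofReal_lt_ofReal_iff (by positivity)).2 (by linarith)

lemma measure_cyl_le_tailDeadMass {M k : ℕ} {q : ℚ} {t : List Bool}
    (h : ¬Alive μ (τ (k + M)) (s (k + M)) (q / 2 ^ (k + 3)) t) :
    μ (cyl t) ≤ tailDeadMass μ τ s M q (cyl t) :=
  calc μ (cyl t) = μ.restrict (deadSet μ (τ (k + M)) (s (k + M)) (q / 2 ^ (k + 3))) (cyl t) := by
        rw [Measure.restrict_apply (measurableSet_cyl t),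
          Set.inter_eq_left.2 (cyl_subset_deadSet h)]
    _ ≤ tailDeadMass μ τ s M q (cyl t) := Measure.le_iff'.1 (Measure.le_sum _ k) _

end TailDeadMass

theorem borel_cantelli_convergence_general (μ : Measure Cantor) [IsProbabilityMeasure μ]
    (s : ℕ → ℝ) (A : ℕ → Set Cantor) (hs0 : ∀ i, 0 ≤ s i)
    (hsum : Summable s) (hwin : ∀ i, WinsII μ (s i) (A i)) :
    WinsII μ 0 (⋃ m ∈ {m : ℕ | 1 ≤ m}, ⋂ i ∈ {i : ℕ | m ≤ i}, A i) := by
  choose τ hτ using hwin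
  choose M hM using fun q : ℚ => (eventually_tail_lt s q).exists
  refine ⟨massFollower fun q => tailDeadMass μ τ s (M q) q, fun r hr => ?_⟩
  set q := (r 0).1.1 + (r 0).1.2
  have hq : IOK μ 0 r 0 → 0 < q := fun h => by exact_mod_cast h.2.2
  have key : ∀ n, (∀ k ≤ n, IOK μ 0 r k) →
      tailDeadMass μ τ s (M q) q (cyl (path r (n + 1))) < ENNReal.ofReal (sel r n) :=
    fun n hI => have hq := hq (hI 0 n.zero_le)
      massFollower_lt_sel hr (tailDeadMass_univ_lt hτ hs0 hsum hq ((hM q).2 hq))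
        fun k hk => (hI (k + 1) hk).2.2
  refine .of_forall (fun n hI => ?_) fun hI => ?_
  · have := ENNReal.ofReal_pos.1 (bot_le.trans_lt (key n hI))
    exact_mod_cast this.ne'
  · simp only [Set.mem_iUnion, Set.mem_iInter, Set.mem_ofPred_eq]
    refine ⟨M q, (hM q).1, fun i hi => ?_⟩
    obtain ⟨k, rfl⟩ := Nat.exists_eq_add_of_le' hi
    have := hq (hI 0)
    refine mem_of_forall_alive (e := q / 2 ^ (k + 3)) (hτ (k + M q)) (by positivity) fun n => ?_
    cases n with
    | zero => exact alive_nil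
    | succ n =>
      show Alive _ _ _ _ (path r (n + 1))
      by_contra hdead
      exact ((measure_cyl_le_tailDeadMass hdead).trans_lt (key n fun j _ => hI j)).not_ge
        (ENNReal.ofReal_le_of_le_toReal (hI n).sel_le)

/-- Borel–Cantelli (convergence direction), game version: if `∑ᵢ sᵢ < ∞` and player II wins
each `G(sᵢ, Aᵢ)`, then player II wins `G(0, ⋃_{m≥1} ⋂_{i≥m} Aᵢ)`. -/
theorem borel_cantelli_convergence (μ : Measure Cantor) [IsProbabilityMeasure μ]
    (s : ℕ → ℝ) (A : ℕ → Set Cantor) (hs0 : ∀ i, 0 ≤ s i) (hs1 : ∀ i, s i < 1)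
    (hsum : Summable s) (hwin : ∀ i, WinsII μ (s i) (A i)) :
    WinsII μ 0 (⋃ m ∈ {m : ℕ | 1 ≤ m}, ⋂ i ∈ {i : ℕ | m ≤ i}, A i) :=
  borel_cantelli_convergence_general μ s A hs0 hsum hwin
end MeasureGame
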